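/- arXiv:1405.2721 — 4 statements merged into one kernel-verified Lean document; each statement's English description precedes it below -/
import Mathlib

section
/- Let V be a finite-dimensional real inner product space, J an orthogonal complex structure on V, and P a nearly Kähler torsion tensor on (V, J). If P is not identically zero (i.e. there exist x, y ∈ V with P(x,y) ≠ 0, the pointwise form of strictness of a nearly Kähler structure), then dim V ≥ 6. (The six vectors x, J x, y₁, J y₁, P(x,y), J(P(x,y)) are nonzero and pairwise orthogonal, where y₁ is the component of y orthogonal to the span of x and J x.) -/
open scoped RealInnerProductSpace

/-!
If `P x y ≠ 0`, replace `y` by its component orthogonal to the complex line `span {x, J x}`;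
this does not change `P x y`, since `P x` kills `x` and `J x`. Skew-adjointness of `P x` and of `J`
then makes the complex lines of `x`, `y` and `P x y` pairwise orthogonal, and three pairwise
orthogonal complex lines span a real subspace of dimension six.
-/

open Submodule

section

variable {V : Type*} [NormedAddCommGroup V] [InnerProductSpace ℝ V]

structure IsOrthogonalComplexStructure (J : V →ₗ[ℝ] V) : Prop where
  apply_apply : ∀ x, J (J x) = -x
  inner_apply_apply : ∀ x y, ⟪J x, J y⟫ = ⟪x, y⟫

structure IsNearlyKahlerTorsion (J : V →ₗ[ℝ] V) (P : V →ₗ[ℝ] V →ₗ[ℝ] V) : Prop where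
  inner_apply_left : ∀ x y z, ⟪P x y, z⟫ = -⟪y, P x z⟫
  apply_apply_right : ∀ x y, P x (J y) = -J (P x y)
  apply_self : ∀ x, P x x = 0

def complexLine (J : V →ₗ[ℝ] V) (v : V) : Submodule ℝ V := span ℝ {v, J v}

lemma mem_complexLine_self (J : V →ₗ[ℝ] V) (v : V) : v ∈ complexLine J v :=
  subset_span (Set.mem_insert _ _)

lemma apply_mem_complexLine (J : V →ₗ[ℝ] V) (v : V) : J v ∈ complexLine J v :=
  subset_span (Set.mem_insert_of_mem _ rfl)

namespace IsOrthogonalComplexStructure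

variable {J : V →ₗ[ℝ] V} (hJ : IsOrthogonalComplexStructure J)
include hJ

lemma inner_apply_left (v w : V) : ⟪J v, w⟫ = -⟪v, J w⟫ := by
  rw [← hJ.inner_apply_apply, hJ.apply_apply, inner_neg_left]

lemma inner_apply_self (v : V) : ⟪v, J v⟫ = 0 := by
  have h := hJ.inner_apply_left v v
  rw [real_inner_comm] at h
  linarith

lemma apply_ne_zero {v : V} (hv : v ≠ 0) : J v ≠ 0 := by
  intro h
  apply hv
  simpa [h] using (hJ.apply_apply v).symm

lemma isOrtho_complexLine_iff {v w : V} :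
    complexLine J v ⟂ complexLine J w ↔ ⟪v, w⟫ = 0 ∧ ⟪v, J w⟫ = 0 := by
  simp only [complexLine, isOrtho_span, Set.mem_insert_iff, Set.mem_singleton_iff,
    forall_eq_or_imp, forall_eq, hJ.inner_apply_left, hJ.apply_apply, inner_neg_right, neg_eq_zero]
  tauto

lemma isOrtho_complexLine_of_mem_orthogonal {v w : V} (hw : w ∈ (complexLine J v)ᗮ) :
    complexLine J v ⟂ complexLine J w := by
  rw [mem_orthogonal] at hw
  refine hJ.isOrtho_complexLine_iff.mpr ⟨hw v (mem_complexLine_self J v), ?_⟩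
  rw [← neg_eq_zero, ← hJ.inner_apply_left]
  exact hw (J v) (apply_mem_complexLine J v)

lemma two_mul_card_le_finrank [FiniteDimensional ℝ V] {ι : Type*} [Fintype ι] {v : ι → V}
    (hv : ∀ i, v i ≠ 0) (hortho : Pairwise fun i j ↦ complexLine J (v i) ⟂ complexLine J (v j)) :
    2 * Fintype.card ι ≤ Module.finrank ℝ V := by
  have hinner_apply : ∀ i j, ⟪v i, J (v j)⟫ = 0 := fun i j ↦ by
    rcases eq_or_ne i j with rfl | hij
    · exact hJ.inner_apply_self (v i)
    · exact (hJ.isOrtho_complexLine_iff.mp (hortho hij)).2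
  have hinner_ne : ∀ i j, i ≠ j → ⟪v i, v j⟫ = 0 := fun i j hij ↦
    (hJ.isOrtho_complexLine_iff.mp (hortho hij)).1
  have hli : LinearIndependent ℝ (Sum.elim v (J ∘ v)) := by
    refine linearIndependent_of_ne_zero_of_inner_eq_zero ?_ ?_
    · rintro (i | i)
      exacts [hv i, hJ.apply_ne_zero (hv i)]
    · rintro (i | i) (j | j) hij
      · exact hinner_ne i j (ne_of_apply_ne _ hij)
      · exact hinner_apply i j
      · simp [hJ.inner_apply_left, hinner_apply]
      · simpa [hJ.inner_apply_apply] using hinner_ne i j (ne_of_apply_ne _ hij)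
  simpa [two_mul] using hli.fintype_card_le_finrank

end IsOrthogonalComplexStructure

namespace IsNearlyKahlerTorsion

variable {J : V →ₗ[ℝ] V} {P : V →ₗ[ℝ] V →ₗ[ℝ] V} (hP : IsNearlyKahlerTorsion J P)
include hP

lemma apply_eq_zero_of_mem_complexLine {x w : V} (hw : w ∈ complexLine J x) : P x w = 0 := by
  have hle : complexLine J x ≤ LinearMap.ker (P x) := by
    rw [complexLine, span_le, Set.insert_subset_iff, Set.singleton_subset_iff]
    simp [hP.apply_self, hP.apply_apply_right]
  exact hle hw

lemma apply_apply_eq_neg (x y : V) : J (P x y) = -P x (J y) := by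
  rw [hP.apply_apply_right, neg_neg]

lemma inner_apply_eq_zero_of_mem_complexLine {x u : V} (hu : u ∈ complexLine J x) (y : V) :
    ⟪P x y, u⟫ = 0 := by
  rw [hP.inner_apply_left, hP.apply_eq_zero_of_mem_complexLine hu, inner_zero_right, neg_zero]

lemma inner_apply_self (x y : V) : ⟪y, P x y⟫ = 0 := by
  have h := hP.inner_apply_left x y y
  rw [real_inner_comm] at h
  linarith

lemma isOrtho_complexLine_left (x y : V) : complexLine J x ⟂ complexLine J (P x y) := by
  rw [complexLine, complexLine, isOrtho_span]
  have hline : ∀ u ∈ ({x, J x} : Set V), ∀ y', ⟪u, P x y'⟫ = 0 := fun u hu y' ↦ by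
    rw [real_inner_comm]
    exact hP.inner_apply_eq_zero_of_mem_complexLine (subset_span hu) y'
  rintro u hu v (rfl | rfl)
  · exact hline u hu y
  · rw [hP.apply_apply_eq_neg, inner_neg_right, hline u hu, neg_zero]

lemma isOrtho_complexLine_right (hJ : IsOrthogonalComplexStructure J) (x y : V) :
    complexLine J y ⟂ complexLine J (P x y) := by
  refine hJ.isOrtho_complexLine_iff.mpr ⟨hP.inner_apply_self x y, ?_⟩
  have h₁ : ⟪y, J (P x y)⟫ = ⟪P x y, J y⟫ := by
    rw [hP.apply_apply_eq_neg, inner_neg_right, ← hP.inner_apply_left]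
  have h₂ : ⟪P x y, J y⟫ = -⟪y, J (P x y)⟫ := by
    rw [← hJ.inner_apply_left, real_inner_comm]
  linarith

end IsNearlyKahlerTorsion

end

/-- If a nearly Kähler torsion tensor `P` on a finite-dimensional `(V, J)` is not
identically zero (pointwise strictness), then `dim V ≥ 6`. -/
theorem nearlyKahler_strict_dim_ge_six
    (V : Type*) [NormedAddCommGroup V] [InnerProductSpace ℝ V] [FiniteDimensional ℝ V]
    (J : V →ₗ[ℝ] V)
    (hJ1 : ∀ x : V, J (J x) = -x)
    (hJ2 : ∀ x y : V, ⟪J x, J y⟫ = ⟪x, y⟫)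
    (P : V →ₗ[ℝ] V →ₗ[ℝ] V)
    (hP1 : ∀ x y z : V, ⟪P x y, z⟫ = -⟪y, P x z⟫)
    (hP2 : ∀ x y : V, P x (J y) = -J (P x y))
    (hP3 : ∀ x : V, P x x = 0)
    (hstrict : ∃ x y : V, P x y ≠ 0) :
    6 ≤ Module.finrank ℝ V := by
  have hJ : IsOrthogonalComplexStructure J := ⟨hJ1, hJ2⟩
  have hP : IsNearlyKahlerTorsion J P := ⟨hP1, hP2, hP3⟩
  obtain ⟨x, y₀, hxy₀⟩ := hstrict
  obtain ⟨w, hw, y, hy_perp, rfl⟩ := (complexLine J x).exists_add_mem_mem_orthogonal y₀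
  rw [map_add, hP.apply_eq_zero_of_mem_complexLine hw, zero_add] at hxy₀
  have hx : x ≠ 0 := by rintro rfl; simp at hxy₀
  have hy : y ≠ 0 := by rintro rfl; simp at hxy₀
  have hxy := hJ.isOrtho_complexLine_of_mem_orthogonal hy_perp
  have hxz := hP.isOrtho_complexLine_left x y
  have hyz := hP.isOrtho_complexLine_right hJ x y
  have hv : ∀ i, ![x, y, P x y] i ≠ 0 := by simp [Fin.forall_fin_succ, hx, hy, hxy₀]
  have hortho : Pairwise fun i j ↦
      complexLine J (![x, y, P x y] i) ⟂ complexLine J (![x, y, P x y] j) := by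
    intro i j hij
    fin_cases i <;> fin_cases j <;>
      first | exact absurd rfl hij | simp [hxy, hxz, hyz, hxy.symm, hxz.symm, hyz.symm]
  simpa using hJ.two_mul_card_le_finrank hv hortho
end

section
/- Let V be a real inner product space, J an orthogonal complex structure on V, and P a nearly Kähler torsion tensor on (V, J) of constant type α. Then for all w, x, y, z ∈ V the fully polarized identity holds: ⟪P(w,x), P(y,z)⟫ = α·(⟪w,y⟫⟪x,z⟫ − ⟪w,z⟫⟪x,y⟫ − ⟪w,J y⟫⟪x,J z⟫ + ⟪w,J z⟫⟪x,J y⟫). -/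
open scoped RealInnerProductSpace

/-- For a nearly Kähler torsion tensor `P` on `(V, J)` of constant type `α`,
the fully polarized identity
`⟪P w x, P y z⟫ = α (⟪w,y⟫⟪x,z⟫ − ⟪w,z⟫⟪x,y⟫ − ⟪w,Jy⟫⟪x,Jz⟫ + ⟪w,Jz⟫⟪x,Jy⟫)` holds. -/
theorem nearlyKahler_constant_type_polarized
    (V : Type*) [NormedAddCommGroup V] [InnerProductSpace ℝ V]
    (J : V →ₗ[ℝ] V)
    (hJ1 : ∀ x : V, J (J x) = -x)
    (hJ2 : ∀ x y : V, ⟪J x, J y⟫ = ⟪x, y⟫)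
    (P : V →ₗ[ℝ] V →ₗ[ℝ] V)
    (hP1 : ∀ x y z : V, ⟪P x y, z⟫ = -⟪y, P x z⟫)
    (hP2 : ∀ x y : V, P x (J y) = -J (P x y))
    (hP3 : ∀ x : V, P x x = 0)
    (α : ℝ)
    (htype : ∀ x y : V, ‖P x y‖ ^ 2 = α * (‖x‖ ^ 2 * ‖y‖ ^ 2 - ⟪x, y⟫ ^ 2 - ⟪J x, y⟫ ^ 2)) :
    ∀ w x y z : V,
      ⟪P w x, P y z⟫ =
        α * (⟪w, y⟫ * ⟪x, z⟫ - ⟪w, z⟫ * ⟪x, y⟫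
          - ⟪w, J y⟫ * ⟪x, J z⟫ + ⟪w, J z⟫ * ⟪x, J y⟫) := by
  -- inner-product version of constant type
  have hA : ∀ x y : V, ⟪P x y, P x y⟫ =
      α * (⟪x, x⟫ * ⟪y, y⟫ - ⟪x, y⟫ ^ 2 - ⟪J x, y⟫ ^ 2) := by
    intro x y
    have h := htype x y
    rw [← real_inner_self_eq_norm_sq, ← real_inner_self_eq_norm_sq,
      ← real_inner_self_eq_norm_sq] at h
    linarith
  -- polarize in the second variable
  have h2 : ∀ x y z : V, ⟪P x y, P x z⟫ =
      α * (⟪x, x⟫ * ⟪y, z⟫ - ⟪x, y⟫ * ⟪x, z⟫ - ⟪J x, y⟫ * ⟪J x, z⟫) := by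
    intro x y z
    have h1 := hA x (y + z)
    have hy := hA x y
    have hz := hA x z
    simp only [map_add, inner_add_left, inner_add_right] at h1
    have c1 : ⟪P x z, P x y⟫ = ⟪P x y, P x z⟫ := real_inner_comm _ _
    have c2 : ⟪z, y⟫ = ⟪y, z⟫ := real_inner_comm _ _
    linear_combination (h1 - hy - hz) / 2 - c1 / 2 + (α * ⟪x,x⟫ / 2) * c2
  -- polarize in the first variable
  have h3 : ∀ w x y z : V, ⟪P w y, P x z⟫ + ⟪P x y, P w z⟫ =
      α * (2 * ⟪w, x⟫ * ⟪y, z⟫ - ⟪w, y⟫ * ⟪x, z⟫ - ⟪x, y⟫ * ⟪w, z⟫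
        - ⟪J w, y⟫ * ⟪J x, z⟫ - ⟪J x, y⟫ * ⟪J w, z⟫) := by
    intro w x y z
    have h1 := h2 (w + x) y z
    have hw := h2 w y z
    have hx := h2 x y z
    simp only [map_add, LinearMap.add_apply, inner_add_left, inner_add_right] at h1
    have c1 : ⟪x, w⟫ = ⟪w, x⟫ := real_inner_comm _ _
    linear_combination h1 - hw - hx + (α * ⟪y,z⟫) * c1
  -- antisymmetry of P
  have hanti : ∀ x y : V, P x y = - P y x := by
    intro x y
    have h := hP3 (x + y)
    simp only [map_add, LinearMap.add_apply, hP3, zero_add, add_zero] at h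
    exact eq_neg_of_add_eq_zero_right h
  -- J is skew-adjoint
  have hskew : ∀ a b : V, ⟪J a, b⟫ = -⟪a, J b⟫ := by
    intro a b
    have h := hJ2 a (J b)
    rw [hJ1, inner_neg_right] at h
    linarith
  -- P (J x) y = - J (P x y)
  have hPJ1 : ∀ x y : V, P (J x) y = -J (P x y) := by
    intro x y
    rw [hanti (J x) y, hP2, hanti x y, map_neg, neg_neg]
  -- P (J x) (J z) = - P x z
  have hPJJ : ∀ x z : V, P (J x) (J z) = -(P x z) := by
    intro x z
    rw [hP2, hPJ1, map_neg, neg_neg, hJ1]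
  intro w x y z
  have e1 := h3 y w x z
  have e2 := h3 y (J w) x (J z)
  simp only [hPJJ, hPJ1, hP2, hJ1, inner_neg_left, inner_neg_right, neg_neg, hJ2] at e2
  -- e1 : ⟪P y x, P w z⟫ + ⟪P w x, P y z⟫ = ...
  -- e2 : -⟪P y x, P w z⟫ + ⟪P w x, P y z⟫ = ...
  have c1 : ⟪y, w⟫ = ⟪w, y⟫ := real_inner_comm _ _
  have c2 : ⟪y, x⟫ = ⟪x, y⟫ := real_inner_comm _ _
  have c3 : ⟪J y, x⟫ = ⟪x, J y⟫ := real_inner_comm _ _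
  have c4 : ⟪J w, x⟫ = ⟪x, J w⟫ := real_inner_comm _ _
  have c5 : ⟪J w, z⟫ = -⟪w, J z⟫ := hskew _ _
  have c6 : ⟪J y, z⟫ = -⟪y, J z⟫ := hskew _ _
  have c7 : ⟪y, J w⟫ = -⟪w, J y⟫ := by rw [real_inner_comm, hskew, real_inner_comm]
  have c8 : ⟪x, J w⟫ = -⟪w, J x⟫ := by rw [real_inner_comm, hskew, real_inner_comm]
  have c9 : ⟪y, J z⟫ = ⟪J z, y⟫ := real_inner_comm _ _
  linear_combination (e1 + e2) / 2 + (α * ⟪x,z⟫) * c1 - (α * ⟪w,z⟫) * c2 - (α * ⟪J y,x⟫ / 2) * c5 - (α * ⟪J w,x⟫ / 2) * c6 + (α * ⟪x,J z⟫) * c7 + (α * ⟪w,J z⟫) * c3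
end

section
/- Let V be a real inner product space, J an orthogonal complex structure on V, and P a nearly Kähler torsion tensor on (V, J) of constant type α with α > 0. Then for every nonzero x ∈ V and every y ∈ V one has P(x,y) = 0 if and only if y lies in the linear span of {x, J x}. -/
open scoped RealInnerProductSpace

/-- For a nearly Kähler torsion tensor `P` on `(V, J)` of constant type `α > 0`,
for every nonzero `x` and every `y`, `P x y = 0` iff `y` lies in the span of `{x, J x}`. -/
theorem nearlyKahler_constant_type_kernel
    (V : Type*) [NormedAddCommGroup V] [InnerProductSpace ℝ V]
    (J : V →ₗ[ℝ] V)
    (hJ1 : ∀ x : V, J (J x) = -x)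
    (hJ2 : ∀ x y : V, ⟪J x, J y⟫ = ⟪x, y⟫)
    (P : V →ₗ[ℝ] V →ₗ[ℝ] V)
    (hP1 : ∀ x y z : V, ⟪P x y, z⟫ = -⟪y, P x z⟫)
    (hP2 : ∀ x y : V, P x (J y) = -J (P x y))
    (hP3 : ∀ x : V, P x x = 0)
    (α : ℝ) (hα : 0 < α)
    (htype : ∀ x y : V, ‖P x y‖ ^ 2 = α * (‖x‖ ^ 2 * ‖y‖ ^ 2 - ⟪x, y⟫ ^ 2 - ⟪J x, y⟫ ^ 2)) :
    ∀ x y : V, x ≠ 0 → (P x y = 0 ↔ y ∈ Submodule.span ℝ ({x, J x} : Set V)) := by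
  intro x y hx
  have hxJ : ⟪x, J x⟫ = 0 := by
    have h := hJ2 x (J x)
    rw [hJ1, inner_neg_right, real_inner_comm] at h
    linarith
  have hnx : (0:ℝ) < ‖x‖ ^ 2 := by
    have := norm_pos_iff.mpr hx
    positivity
  have hJx2 : ‖J x‖ ^ 2 = ‖x‖ ^ 2 := by
    rw [← real_inner_self_eq_norm_sq, ← real_inner_self_eq_norm_sq, hJ2]
  constructor
  · intro h
    have h0 : ‖x‖ ^ 2 * ‖y‖ ^ 2 - ⟪x, y⟫ ^ 2 - ⟪J x, y⟫ ^ 2 = 0 := by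
      have ht := htype x y
      rw [h, norm_zero] at ht
      nlinarith
    set a : ℝ := ⟪x, y⟫ / ‖x‖ ^ 2 with ha
    set b : ℝ := ⟪J x, y⟫ / ‖x‖ ^ 2 with hb
    have hz : ‖y - (a • x + b • J x)‖ ^ 2 = 0 := by
      rw [← real_inner_self_eq_norm_sq]
      simp only [inner_sub_left, inner_sub_right, inner_add_left, inner_add_right,
        real_inner_smul_left, real_inner_smul_right]
      have e1 : ⟪x, x⟫ = ‖x‖ ^ 2 := real_inner_self_eq_norm_sq x
      have e2 : ⟪J x, J x⟫ = ‖x‖ ^ 2 := by rw [hJ2]; exact e1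
      have e3 : ⟪y, y⟫ = ‖y‖ ^ 2 := real_inner_self_eq_norm_sq y
      have c1 : ⟪y, x⟫ = ⟪x, y⟫ := (real_inner_comm y x).symm
      have c2 : ⟪y, J x⟫ = ⟪J x, y⟫ := (real_inner_comm y (J x)).symm
      have c3 : ⟪J x, x⟫ = (0:ℝ) := by rw [real_inner_comm]; exact hxJ
      rw [e1, e2, e3, c1, c2, c3, hxJ, ha, hb]
      field_simp
      nlinarith [h0, hnx]
    have hy : y = a • x + b • J x := by
      have := norm_eq_zero.mp (pow_eq_zero_iff (n := 2) (by norm_num) |>.mp hz)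
      have := sub_eq_zero.mp this
      exact this
    rw [hy]
    exact Submodule.add_mem _
      (Submodule.smul_mem _ _ (Submodule.subset_span (by simp)))
      (Submodule.smul_mem _ _ (Submodule.subset_span (by simp)))
  · intro h
    obtain ⟨a, b, hab⟩ := Submodule.mem_span_pair.mp h
    rw [← hab]
    simp [hP3, hP2]
end

section
/- Let n ≥ 2 and let λ₁, …, λₙ be real numbers such that for every index i one has λᵢ · (∑_{j ≠ i} λⱼ) > 0 (this is the positivity of the Ricci curvature Ric(Xᵢ,Xᵢ) = λᵢ ∑_{j≠i} λⱼ of a hypersurface of Euclidean space with principal curvatures λ₁, …, λₙ). Then either all λᵢ are positive or all λᵢ are negative; consequently, if n is even, the product λ₁·λ₂⋯λₙ (the Gauss–Kronecker curvature) is strictly positive. -/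
/-- If `λ₁, …, λₙ` (`n ≥ 2`) satisfy `λᵢ ∑_{j ≠ i} λⱼ > 0` for every `i`
(positive Ricci curvature of a Euclidean hypersurface with principal curvatures `λᵢ`),
then all `λᵢ` are positive or all are negative; consequently, for even `n`, the
Gauss–Kronecker curvature `∏ᵢ λᵢ` is strictly positive. -/
theorem principal_curvatures_same_sign_of_positive_ricci
    (n : ℕ) (hn : 2 ≤ n) (l : Fin n → ℝ)
    (hRic : ∀ i : Fin n, 0 < l i * ∑ j ∈ Finset.univ.erase i, l j) :
    ((∀ i, 0 < l i) ∨ (∀ i, l i < 0)) ∧ (Even n → 0 < ∏ i, l i) := by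
  set S := ∑ j, l j with hS
  have hsum : ∀ i : Fin n, ∑ j ∈ Finset.univ.erase i, l j = S - l i := by
    intro i
    rw [Finset.sum_erase_eq_sub (Finset.mem_univ i)]
  have hR : ∀ i : Fin n, 0 < l i * (S - l i) := by
    intro i; have := hRic i; rwa [hsum i] at this
  have hne : ∀ i : Fin n, l i ≠ 0 := by
    intro i h
    have := hR i
    rw [h] at this; simp at this
  have key : (∀ i, 0 < l i) ∨ (∀ i, l i < 0) := by
    -- if some positive and some negative, contradiction
    by_cases hp : ∀ i, 0 < l i
    · exact Or.inl hp
    · right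
      push_neg at hp
      obtain ⟨i, hi⟩ := hp
      have hineg : l i < 0 := lt_of_le_of_ne hi (hne i)
      have hSlt : S < l i := by
        have := hR i
        have h2 : S - l i < 0 := by
          by_contra h
          push_neg at h
          nlinarith
        linarith
      intro j
      by_contra h
      push_neg at h
      have hjpos : 0 < l j := lt_of_le_of_ne h (Ne.symm (hne j))
      have hSgt : l j < S := by
        have := hR j
        have h2 : 0 < S - l j := by
          by_contra h3
          push_neg at h3
          nlinarith
        linarith
      linarith
  refine ⟨key, fun hev => ?_⟩
  rcases key with hp | hn2
  · exact Finset.prod_pos fun i _ => hp i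
  · have hpow : ((-1 : ℝ)) ^ n = ∏ _i : Fin n, (-1 : ℝ) := by simp
    have : ∏ i, l i = (-1 : ℝ) ^ n * ∏ i, (-l i) := by
      rw [hpow, ← Finset.prod_mul_distrib]
      simp
    rw [this, hev.neg_one_pow, one_mul]
    exact Finset.prod_pos fun i _ => by linarith [hn2 i]
end
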